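/- arXiv:1310.5957 — 7 statements merged into one kernel-verified Lean document; each statement's English description precedes it below -/
import Mathlib

section
/- If f and g are polymatroids on N with g modular, then the convolution f∗g, defined by f∗g(I) = min over J ⊆ I of f(J) + g(I∖J), is a polymatroid on N. -/
/-!
Write `f ∗ g (I) = f (A) + g (I \ A)` with an optimal `A ⊆ I`. For `I ⊆ J`, intersecting an
optimal `A ⊆ J` with `I` gives monotonicity. For submodularity, take optimal `A ⊆ I`, `B ⊆ J`
and test `f ∗ g` at `I ∪ J` with `A ∪ B` and at `I ∩ J` with `A ∩ B`: the `f`-parts are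
controlled by submodularity of `f`, and the `g`-parts by modularity of `g` and nonnegativity of
its weights, since every element of `(I ∪ J) \ (A ∪ B)` and `(I ∩ J) \ (A ∩ B)` is counted at
least as often in `I \ A` and `J \ B`.
-/

open Finset

variable {α : Type*} [DecidableEq α]

/-- A polymatroid rank function on the ground set `N`. -/
def IsPolymatroid (N : Finset α) (f : Finset α → ℝ) : Prop :=
  f ∅ = 0 ∧
  (∀ I J : Finset α, I ⊆ J → J ⊆ N → f I ≤ f J) ∧
  (∀ I J : Finset α, I ⊆ N → J ⊆ N → f (I ∪ J) + f (I ∩ J) ≤ f I + f J)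

/-- A modular set function on `N`. -/
def IsModular (N : Finset α) (g : Finset α → ℝ) : Prop :=
  ∀ I : Finset α, I ⊆ N → g I = ∑ i ∈ I, g {i}

/-- A tight set function on `N`. -/
def IsTight (N : Finset α) (g : Finset α → ℝ) : Prop :=
  ∀ i ∈ N, g N = g (N \ {i})

/-- The convolution `f ∗ g` of two set functions. -/
noncomputable def conv (f g : Finset α → ℝ) (I : Finset α) : ℝ :=
  I.powerset.inf' (Finset.powerset_nonempty I) (fun J => f J + g (I \ J))

namespace Finset

theorem sum_add_sum_le_sum_add_sum {ι β : Type*} [DecidableEq ι] [AddCommMonoid β]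
    [PartialOrder β] [IsOrderedAddMonoid β] {w : ι → β} {P Q S T : Finset ι}
    (hunion : P ∪ Q ⊆ S ∪ T) (hinter : P ∩ Q ⊆ S ∩ T) (hw : ∀ i ∈ S ∪ T, 0 ≤ w i) :
    ∑ i ∈ P, w i + ∑ i ∈ Q, w i ≤ ∑ i ∈ S, w i + ∑ i ∈ T, w i := by
  rw [← sum_union_inter, ← sum_union_inter (s₁ := S)]
  exact add_le_add (sum_le_sum_of_subset_of_nonneg hunion fun i hi _ => hw i hi)
    (sum_le_sum_of_subset_of_nonneg hinter fun i hi _ => hw i (inter_subset_union hi))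

theorem union_sdiff_union_union_inter_sdiff_inter_subset {I J A B : Finset α} :
    (I ∪ J) \ (A ∪ B) ∪ (I ∩ J) \ (A ∩ B) ⊆ I \ A ∪ J \ B := fun x => by
  simp only [mem_union, mem_sdiff, mem_inter]
  tauto

theorem union_sdiff_union_inter_inter_sdiff_inter_subset {I J A B : Finset α} :
    ((I ∪ J) \ (A ∪ B)) ∩ ((I ∩ J) \ (A ∩ B)) ⊆ (I \ A) ∩ (J \ B) := fun x => by
  simp only [mem_union, mem_sdiff, mem_inter]
  tauto

end Finset

theorem IsPolymatroid.singleton_nonneg {N : Finset α} {g : Finset α → ℝ} (hg : IsPolymatroid N g)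
    {i : α} (hi : i ∈ N) : 0 ≤ g {i} :=
  hg.1 ▸ hg.2.1 ∅ {i} (empty_subset _) (singleton_subset_iff.2 hi)

theorem IsModular.add_le_add {N : Finset α} {g : Finset α → ℝ} (hgm : IsModular N g)
    (hg : ∀ i ∈ N, 0 ≤ g {i}) {P Q S T : Finset α} (hS : S ⊆ N) (hT : T ⊆ N)
    (hunion : P ∪ Q ⊆ S ∪ T) (hinter : P ∩ Q ⊆ S ∩ T) : g P + g Q ≤ g S + g T := by
  have hST : S ∪ T ⊆ N := union_subset hS hT
  rw [hgm P (subset_union_left.trans hunion |>.trans hST),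
    hgm Q (subset_union_right.trans hunion |>.trans hST), hgm S hS, hgm T hT]
  exact sum_add_sum_le_sum_add_sum hunion hinter fun i hi => hg i (hST hi)

section conv

variable {f g : Finset α → ℝ}

theorem conv_le {I J : Finset α} (h : J ⊆ I) : conv f g I ≤ f J + g (I \ J) :=
  inf'_le _ (mem_powerset.2 h)

theorem exists_conv_eq (I : Finset α) : ∃ J ⊆ I, conv f g I = f J + g (I \ J) := by
  obtain ⟨J, hJ, hJeq⟩ := exists_mem_eq_inf' (powerset_nonempty I) fun J => f J + g (I \ J)
  exact ⟨J, mem_powerset.1 hJ, hJeq⟩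

@[simp]
theorem conv_empty : conv f g ∅ = f ∅ + g ∅ := by
  simp [conv]

variable {N : Finset α}

theorem conv_mono (hf : ∀ I J, I ⊆ J → J ⊆ N → f I ≤ f J)
    (hg : ∀ I J, I ⊆ J → J ⊆ N → g I ≤ g J) {I J : Finset α} (hIJ : I ⊆ J) (hJN : J ⊆ N) :
    conv f g I ≤ conv f g J := by
  obtain ⟨K, hKJ, hK⟩ := exists_conv_eq (f := f) (g := g) J
  have hsdiff : I \ (K ∩ I) ⊆ J \ K := fun x hx => by
    simp only [mem_sdiff, mem_inter, not_and] at hx ⊢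
    exact ⟨hIJ hx.1, fun hxK => hx.2 hxK hx.1⟩
  calc conv f g I ≤ f (K ∩ I) + g (I \ (K ∩ I)) := conv_le inter_subset_right
    _ ≤ f K + g (J \ K) := add_le_add (hf _ _ inter_subset_left (hKJ.trans hJN))
        (hg _ _ hsdiff (sdiff_subset.trans hJN))
    _ = conv f g J := hK.symm

theorem conv_submodular (hf : ∀ I J, I ⊆ N → J ⊆ N → f (I ∪ J) + f (I ∩ J) ≤ f I + f J)
    (hgm : IsModular N g) (hg : ∀ i ∈ N, 0 ≤ g {i}) {I J : Finset α} (hI : I ⊆ N) (hJ : J ⊆ N) :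
    conv f g (I ∪ J) + conv f g (I ∩ J) ≤ conv f g I + conv f g J := by
  obtain ⟨A, hAI, hA⟩ := exists_conv_eq (f := f) (g := g) I
  obtain ⟨B, hBJ, hB⟩ := exists_conv_eq (f := f) (g := g) J
  have hfAB := hf A B (hAI.trans hI) (hBJ.trans hJ)
  have hgAB : g ((I ∪ J) \ (A ∪ B)) + g ((I ∩ J) \ (A ∩ B)) ≤ g (I \ A) + g (J \ B) :=
    hgm.add_le_add hg (sdiff_subset.trans hI) (sdiff_subset.trans hJ)
      union_sdiff_union_union_inter_sdiff_inter_subset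
      union_sdiff_union_inter_inter_sdiff_inter_subset
  calc conv f g (I ∪ J) + conv f g (I ∩ J)
      ≤ (f (A ∪ B) + g ((I ∪ J) \ (A ∪ B))) + (f (A ∩ B) + g ((I ∩ J) \ (A ∩ B))) :=
        add_le_add (conv_le (union_subset_union hAI hBJ)) (conv_le (inter_subset_inter hAI hBJ))
    _ ≤ (f A + g (I \ A)) + (f B + g (J \ B)) := by linarith
    _ = conv f g I + conv f g J := by rw [hA, hB]

end conv

theorem conv_isPolymatroid (N : Finset α) (f g : Finset α → ℝ)
    (hf : IsPolymatroid N f) (hg : IsPolymatroid N g) (hgm : IsModular N g) :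
    IsPolymatroid N (conv f g) :=
  ⟨by rw [conv_empty, hf.1, hg.1, add_zero], fun _ _ => conv_mono hf.2.1 hg.2.1,
    fun _ _ => conv_submodular hf.2.2 hgm fun _ => hg.singleton_nonneg⟩
end

section
/- Every polymatroid h on N decomposes uniquely as h = h^ti + h^m, where h^m(I) = Σ_{i∈I} [h(N) − h(N∖{i})] is a modular polymatroid and h^ti(I) = h(I) − h^m(I) is a tight polymatroid, i.e., h^ti(N) = h^ti(N∖{i}) for all i ∈ N. -/
/-!
Write `c i = h N - h (N \ {i})` for the marginal of `i` at the top of the lattice. Submodularity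
makes marginals decrease along inclusion, so `c j ≤ h (insert j I) - h I` for every `I ⊆ N \ {j}`; hence
subtracting the modular function `I ↦ ∑ i ∈ I, c i` keeps `h` monotone, and keeps it submodular
because the subtracted part is modular. The top marginals of `h - hᵐ` vanish by construction.
Conversely, if `h = f + g` with `f` tight and `g` modular, the top marginal of `f` is `0` and that
of `g` is `g {i}`, so `g {i} = c i` and `g`, hence `f`, is determined.
-/

open Finset

variable {α : Type*} [DecidableEq α]

def modularPart (N : Finset α) (h : Finset α → ℝ) (I : Finset α) : ℝ :=
  ∑ i ∈ I, (h N - h (N \ {i}))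

def tightPart (N : Finset α) (h : Finset α → ℝ) (I : Finset α) : ℝ :=
  h I - modularPart N h I

section

variable {N I J : Finset α} {h f g : Finset α → ℝ}

theorem sum_sub_sum_diff_singleton (c : α → ℝ) {i : α} (hi : i ∈ N) :
    ∑ j ∈ N, c j - ∑ j ∈ N \ {i}, c j = c i := by
  rw [sdiff_singleton_eq_erase, ← sum_erase_add N c hi]
  ring

theorem IsModular.sub_diff_singleton (hg : IsModular N g) {i : α} (hi : i ∈ N) :
    g N - g (N \ {i}) = g {i} := by
  rw [hg N Subset.rfl, hg (N \ {i}) sdiff_subset, sum_sub_sum_diff_singleton _ hi]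

theorem modularPart_union_add_inter (N I J : Finset α) (h : Finset α → ℝ) :
    modularPart N h (I ∪ J) + modularPart N h (I ∩ J) =
      modularPart N h I + modularPart N h J :=
  sum_union_inter

theorem isModular_modularPart (N : Finset α) (h : Finset α → ℝ) :
    IsModular N (modularPart N h) := fun _ _ =>
  sum_congr rfl fun i _ => (sum_singleton (fun j => h N - h (N \ {j})) i).symm

namespace IsPolymatroid

theorem sub_diff_singleton_nonneg (hh : IsPolymatroid N h) (i : α) :
    0 ≤ h N - h (N \ {i}) :=
  sub_nonneg.mpr (hh.2.1 _ N sdiff_subset Subset.rfl)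

theorem marginal_le_of_subset (hh : IsPolymatroid N h) (hIJ : I ⊆ J) (hJN : J ⊆ N) {j : α}
    (hjN : j ∈ N) (hjJ : j ∉ J) :
    h (insert j J) - h J ≤ h (insert j I) - h I := by
  have hsub := hh.2.2 (insert j I) J (insert_subset hjN (hIJ.trans hJN)) hJN
  rw [insert_union, union_eq_right.mpr hIJ, insert_inter_of_notMem hjJ,
    inter_eq_left.mpr hIJ] at hsub
  linarith

theorem sub_diff_singleton_le_marginal (hh : IsPolymatroid N h) (hIN : I ⊆ N) {j : α}
    (hjN : j ∈ N) (hjI : j ∉ I) :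
    h N - h (N \ {j}) ≤ h (insert j I) - h I := by
  have hI : I ⊆ N \ {j} := subset_sdiff.mpr ⟨hIN, disjoint_singleton_right.mpr hjI⟩
  have hN : insert j (N \ {j}) = N := by
    rw [sdiff_singleton_eq_erase, insert_erase hjN]
  simpa only [hN] using
    hh.marginal_le_of_subset hI sdiff_subset hjN (notMem_sdiff_of_mem_right (mem_singleton_self j))

theorem isPolymatroid_modularPart (hh : IsPolymatroid N h) :
    IsPolymatroid N (modularPart N h) :=
  ⟨sum_empty,
    fun _ _ hIJ _ => sum_le_sum_of_subset_of_nonneg hIJ fun i _ _ => hh.sub_diff_singleton_nonneg i,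
    fun I J _ _ => (modularPart_union_add_inter N I J h).le⟩

theorem tightPart_le_insert (hh : IsPolymatroid N h) (hIN : I ⊆ N) {j : α} (hjN : j ∈ N) :
    tightPart N h I ≤ tightPart N h (insert j I) := by
  by_cases hjI : j ∈ I
  · rw [insert_eq_of_mem hjI]
  · have := hh.sub_diff_singleton_le_marginal hIN hjN hjI
    simp only [tightPart, modularPart, sum_insert hjI]
    linarith

theorem tightPart_le_union (hh : IsPolymatroid N h) (hIN : I ⊆ N) {S : Finset α} (hSN : S ⊆ N) :
    tightPart N h I ≤ tightPart N h (I ∪ S) := by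
  induction S using Finset.induction_on with
  | empty => rw [union_empty]
  | insert a S _ ih =>
    rw [union_insert]
    obtain ⟨haN, hSN⟩ := insert_subset_iff.mp hSN
    exact (ih hSN).trans (hh.tightPart_le_insert (union_subset hIN hSN) haN)

theorem isPolymatroid_tightPart (hh : IsPolymatroid N h) : IsPolymatroid N (tightPart N h) := by
  refine ⟨by simp [tightPart, modularPart, hh.1], fun I J hIJ hJN => ?_, fun I J hI hJ => ?_⟩
  · simpa only [union_eq_right.mpr hIJ] using hh.tightPart_le_union (hIJ.trans hJN) hJN
  · have := hh.2.2 I J hI hJ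
    have := modularPart_union_add_inter N I J h
    simp only [tightPart]
    linarith

end IsPolymatroid

theorem isTight_tightPart (N : Finset α) (h : Finset α → ℝ) : IsTight N (tightPart N h) := by
  intro i hi
  have := sum_sub_sum_diff_singleton (fun j => h N - h (N \ {j})) hi
  simp only [tightPart, modularPart] at this ⊢
  linarith

theorem modularPart_eq_of_isTight_of_isModular (hf : IsTight N f) (hg : IsModular N g)
    (hfg : ∀ I ⊆ N, h I = f I + g I) (hIN : I ⊆ N) : g I = modularPart N h I := by
  have hsingle : ∀ i ∈ N, g {i} = h N - h (N \ {i}) := fun i hi => by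
    rw [hfg N Subset.rfl, hfg (N \ {i}) sdiff_subset, ← hg.sub_diff_singleton hi, hf i hi]
    ring
  rw [hg I hIN]
  exact sum_congr rfl fun i hi => hsingle i (hIN hi)

end

theorem tight_modular_decomposition (N : Finset α) (h : Finset α → ℝ)
    (hh : IsPolymatroid N h) :
    let hm : Finset α → ℝ := fun I => ∑ i ∈ I, (h N - h (N \ {i}))
    let hti : Finset α → ℝ := fun I => h I - hm I
    (IsPolymatroid N hm ∧ IsModular N hm) ∧
    (IsPolymatroid N hti ∧ IsTight N hti) ∧
    (∀ I ⊆ N, h I = hti I + hm I) ∧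
    (∀ f g : Finset α → ℝ,
      IsPolymatroid N f → IsTight N f → IsPolymatroid N g → IsModular N g →
      (∀ I ⊆ N, h I = f I + g I) → ∀ I ⊆ N, f I = hti I ∧ g I = hm I) := by
  refine ⟨⟨hh.isPolymatroid_modularPart, isModular_modularPart N h⟩,
    ⟨hh.isPolymatroid_tightPart, isTight_tightPart N h⟩, fun I _ => (sub_add_cancel _ _).symm, ?_⟩
  intro f g _ hft _ hgm hfg I hIN
  have hgI : g I = modularPart N h I := modularPart_eq_of_isTight_of_isModular hft hgm hfg hIN
  refine ⟨?_, hgI⟩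
  show f I = h I - modularPart N h I
  linarith [hfg I hIN]
end

section
/- Let (N,f) be a polymatroid, L ⊆ N, and 0 ≤ t ≤ f(L). Define f*_{L,t}(I) = min{ f(I), f(L∪I) − t } for I ⊆ N. Then (N, f*_{L,t}) is a polymatroid. -/
open Finset

variable {α : Type*} [DecidableEq α]

/-! The minimum of two submodular functions `f`, `g` is submodular as soon as the mixed inequality
`g (I ∪ J) + f (I ∩ J) ≤ f I + g J` holds. For `g I = f (L ∪ I) - t`, submodularity of `g` is that
of `f` on the pair `(L ∪ I, L ∪ J)`, and the mixed inequality is submodularity of `f` on the pair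
`(I, L ∪ J)` followed by monotonicity. -/

def IsSubmodularOn (N : Finset α) (f : Finset α → ℝ) : Prop :=
  ∀ I J : Finset α, I ⊆ N → J ⊆ N → f (I ∪ J) + f (I ∩ J) ≤ f I + f J

section

variable {N L : Finset α} {f g : Finset α → ℝ}

theorem IsPolymatroid.isSubmodularOn (hf : IsPolymatroid N f) : IsSubmodularOn N f :=
  hf.2.2

theorem IsSubmodularOn.min_of_mixed
    (hf : IsSubmodularOn N f) (hg : IsSubmodularOn N g)
    (hfg : ∀ I J : Finset α, I ⊆ N → J ⊆ N → g (I ∪ J) + f (I ∩ J) ≤ f I + g J) :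
    IsSubmodularOn N (fun I => min (f I) (g I)) := by
  intro I J hI hJ
  have hgf : g (I ∪ J) + f (I ∩ J) ≤ g I + f J := by
    simpa only [union_comm, inter_comm, add_comm (g I)] using hfg J I hJ hI
  have hfu := min_le_left (f (I ∪ J)) (g (I ∪ J))
  have hgu := min_le_right (f (I ∪ J)) (g (I ∪ J))
  have hfi := min_le_left (f (I ∩ J)) (g (I ∩ J))
  have hgi := min_le_right (f (I ∩ J)) (g (I ∩ J))
  calc min (f (I ∪ J)) (g (I ∪ J)) + min (f (I ∩ J)) (g (I ∩ J))
      ≤ min (min (f I + f J) (f I + g J)) (min (g I + f J) (g I + g J)) := by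
        refine le_min (le_min ?_ ?_) (le_min ?_ ?_)
        · linarith [hf I J hI hJ]
        · linarith [hfg I J hI hJ]
        · linarith
        · linarith [hg I J hI hJ]
    _ = min (f I) (g I) + min (f J) (g J) := by
        rw [min_add_add_left, min_add_add_left, min_add_add_right]

theorem IsSubmodularOn.union_left_sub (hf : IsSubmodularOn N f) (hL : L ⊆ N) (t : ℝ) :
    IsSubmodularOn N (fun I => f (L ∪ I) - t) := by
  intro I J hI hJ
  have h := hf (L ∪ I) (L ∪ J) (union_subset hL hI) (union_subset hL hJ)
  rw [← union_union_distrib_left, ← union_inter_distrib_left] at h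
  linarith

theorem IsPolymatroid.union_left_add_le (hf : IsPolymatroid N f) (hL : L ⊆ N)
    {I J : Finset α} (hI : I ⊆ N) (hJ : J ⊆ N) :
    f (L ∪ (I ∪ J)) + f (I ∩ J) ≤ f I + f (L ∪ J) := by
  have hsub := hf.2.2 I (L ∪ J) hI (union_subset hL hJ)
  have hmono : f (I ∩ J) ≤ f (I ∩ (L ∪ J)) :=
    hf.2.1 _ _ (inter_subset_inter_left subset_union_right) (inter_subset_left.trans hI)
  rw [show I ∪ (L ∪ J) = L ∪ (I ∪ J) by ac_rfl] at hsub
  linarith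

end

theorem principal_ext_contraction_isPolymatroid_general (N : Finset α) (f : Finset α → ℝ)
    (hf : IsPolymatroid N f) (L : Finset α) (hL : L ⊆ N) (t : ℝ)
    (ht : t ≤ f L) :
    IsPolymatroid N (fun I => min (f I) (f (L ∪ I) - t)) := by
  refine ⟨by simpa [hf.1] using ht, fun I J hIJ hJ => ?_, ?_⟩
  · have hLIJ := hf.2.1 _ _ (union_subset_union_right hIJ) (union_subset hL hJ)
    exact min_le_min (hf.2.1 I J hIJ hJ) (by linarith)
  · refine hf.isSubmodularOn.min_of_mixed (hf.isSubmodularOn.union_left_sub hL t) fun I J hI hJ => ?_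
    linarith [hf.union_left_add_le hL hI hJ]

theorem principal_ext_contraction_isPolymatroid (N : Finset α) (f : Finset α → ℝ)
    (hf : IsPolymatroid N f) (L : Finset α) (hL : L ⊆ N) (t : ℝ)
    (ht0 : 0 ≤ t) (ht : t ≤ f L) :
    IsPolymatroid N (fun I => min (f I) (f (L ∪ I) - t)) :=
  principal_ext_contraction_isPolymatroid_general N f hf L hL t ht
end

section
/- Let (N,f) be a polymatroid, L ⊆ N, 0 ≤ t ≤ f(L), and suppose that for every I ⊆ N with L not contained in the f-closure cl(I), there exists ℓ ∈ L∖cl(I) with t ≤ f({ℓ}∪I) − f(I). Then f*_{L,t}(I) = f(I) − t when L ⊆ cl(I), and f*_{L,t}(I) = f(I) otherwise, where f*_{L,t}(I) = min{ f(I), f(L∪I) − t }. -/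
/-! When `L ⊆ cl(I)`, diminishing returns lets the elements of `L` be added to `I` one at a time
without increasing `f`, so `f (L ∪ I) = f I`. Otherwise some `ℓ ∈ L \ cl(I)` has gain at least `t`,
and monotonicity gives `f (L ∪ I) - t ≥ f (insert ℓ I) - t ≥ f I`. -/

open Finset

variable {α : Type*} [DecidableEq α]

namespace IsPolymatroid

variable {N : Finset α} {f : Finset α → ℝ}

theorem mono_of_subset (hf : IsPolymatroid N f) {I J : Finset α} (hIJ : I ⊆ J) (hJ : J ⊆ N) :
    f I ≤ f J :=
  hf.2.1 I J hIJ hJ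

theorem marginal_antitone (hf : IsPolymatroid N f) {I J : Finset α} {a : α} (ha : a ∈ N)
    (hIJ : I ⊆ J) (hJ : J ⊆ N) :
    f (insert a J) - f J ≤ f (insert a I) - f I := by
  have hsub := hf.2.2 (insert a I) J (insert_subset ha (hIJ.trans hJ)) hJ
  have hunion : insert a I ∪ J = insert a J := by
    rw [insert_union, union_eq_right.2 hIJ]
  have hinter : f I ≤ f (insert a I ∩ J) :=
    hf.mono_of_subset (subset_inter (subset_insert a I) hIJ) (inter_subset_right.trans hJ)
  rw [hunion] at hsub
  linarith

theorem union_eq_of_forall_insert_eq (hf : IsPolymatroid N f) {I S : Finset α} (hI : I ⊆ N)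
    (hSN : S ⊆ N) (hS : ∀ x ∈ S, f (insert x I) = f I) :
    f (S ∪ I) = f I := by
  induction S using Finset.induction_on with
  | empty => rw [empty_union]
  | @insert a S _ ih =>
    have hSN' : S ⊆ N := (subset_insert a S).trans hSN
    have hSI : S ∪ I ⊆ N := union_subset hSN' hI
    have haN : a ∈ N := hSN (mem_insert_self a S)
    have hIH : f (S ∪ I) = f I := ih hSN' fun x hx => hS x (mem_insert_of_mem hx)
    have hgain := hf.marginal_antitone haN (subset_union_right (s₁ := S)) hSI
    have hmono := hf.mono_of_subset (subset_insert a (S ∪ I)) (insert_subset haN hSI)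
    rw [insert_union, ← hIH]
    linarith [hS a (mem_insert_self a S)]

end IsPolymatroid

theorem principal_ext_contraction_values_general (N : Finset α) (f : Finset α → ℝ)
    (hf : IsPolymatroid N f) (L : Finset α) (hL : L ⊆ N) (t : ℝ)
    (ht0 : 0 ≤ t)
    (hcl : ∀ I ⊆ N, ¬ L ⊆ N.filter (fun x => f (insert x I) = f I) →
      ∃ l ∈ L \ N.filter (fun x => f (insert x I) = f I),
        t ≤ f (insert l I) - f I) :
    ∀ I ⊆ N,
      (L ⊆ N.filter (fun x => f (insert x I) = f I) →
        min (f I) (f (L ∪ I) - t) = f I - t) ∧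
      (¬ L ⊆ N.filter (fun x => f (insert x I) = f I) →
        min (f I) (f (L ∪ I) - t) = f I) := by
  intro I hI
  refine ⟨fun hLcl => ?_, fun hLcl => ?_⟩
  · have hspan : f (L ∪ I) = f I :=
      hf.union_eq_of_forall_insert_eq hI hL fun x hx => (mem_filter.1 (hLcl hx)).2
    rw [hspan]
    exact min_eq_right (by linarith)
  · obtain ⟨l, hl, hgain⟩ := hcl I hI hLcl
    have hle : f (insert l I) ≤ f (L ∪ I) :=
      hf.mono_of_subset (insert_subset (mem_union_left I (mem_sdiff.1 hl).1) subset_union_right)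
        (union_subset hL hI)
    exact min_eq_left (by linarith)

theorem principal_ext_contraction_values (N : Finset α) (f : Finset α → ℝ)
    (hf : IsPolymatroid N f) (L : Finset α) (hL : L ⊆ N) (t : ℝ)
    (ht0 : 0 ≤ t) (ht : t ≤ f L)
    (hcl : ∀ I ⊆ N, ¬ L ⊆ N.filter (fun x => f (insert x I) = f I) →
      ∃ l ∈ L \ N.filter (fun x => f (insert x I) = f I),
        t ≤ f (insert l I) - f I) :
    ∀ I ⊆ N,
      (L ⊆ N.filter (fun x => f (insert x I) = f I) →
        min (f I) (f (L ∪ I) - t) = f I - t) ∧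
      (¬ L ⊆ N.filter (fun x => f (insert x I) = f I) →
        min (f I) (f (L ∪ I) - t) = f I) :=
  principal_ext_contraction_values_general N f hf L hL t ht0 hcl
end

section
/- Let N = {i,j,k,l} and h a tight polymatroid on N (h(N) = h(N∖{m}) for all m ∈ N) with ⬠_{ij}h ≤ 0. Then h(ij) ≥ h(jl), h(ij) ≥ h(il), and h(ij) ≥ h(kl); that is, h(ij) is maximal among h(J) for two-element J ⊆ N. -/
/-!
Tightness gives every three-element subset of `N` the rank `h(N)`, so submodularity of the
pairs `ac, bc` reads `h(N) + h(c) ≤ h(ac) + h(bc)`. Subtracting this inequality for `ik, jk`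
from `⬠_{ij}h ≤ 0` leaves `h(il) + h(jl) + h(kl) ≤ h(ij) + h(l) + h(N)`, and each of the three
inequalities for two of the pairs `il, jl, kl` cancels two of the three terms on the left.
-/

open Finset

variable {α : Type*} [DecidableEq α]

theorem Finset.pair_union_pair_right (a b c : α) :
    ({a, c} : Finset α) ∪ {b, c} = {a, b, c} := by
  ext x; simp only [mem_union, mem_insert, mem_singleton]; tauto

theorem Finset.pair_inter_pair_right {a b : α} (hab : a ≠ b) (c : α) :
    ({a, c} : Finset α) ∩ {b, c} = {c} := by
  ext x; simp only [mem_inter, mem_insert, mem_singleton]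
  constructor
  · rintro ⟨rfl | hxc, hxb | hxc⟩ <;> first | assumption | exact absurd hxb hab
  · rintro rfl; simp

theorem IsPolymatroid.add_singleton_le_pair_add_pair {N : Finset α} {f : Finset α → ℝ}
    (hf : IsPolymatroid N f) {a b c : α} (hab : a ≠ b) (ha : a ∈ N) (hb : b ∈ N) (hc : c ∈ N) :
    f {a, b, c} + f {c} ≤ f {a, c} + f {b, c} := by
  have h := hf.2.2 {a, c} {b, c} (by simp [insert_subset_iff, ha, hc])
    (by simp [insert_subset_iff, hb, hc])
  rwa [pair_union_pair_right, pair_inter_pair_right hab] at h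

theorem IsTight.apply_eq_of_insert_eq {N T : Finset α} {g : Finset α → ℝ} (hg : IsTight N g)
    {x : α} (hx : x ∉ T) (hN : insert x T = N) : g T = g N := by
  subst hN
  rw [hg x (mem_insert_self x T), sdiff_singleton_eq_erase, erase_insert hx]

theorem reversed_ingleton_tight_consequence (i j k l : α)
    (hij : i ≠ j) (hik : i ≠ k) (hil : i ≠ l) (hjk : j ≠ k) (hjl : j ≠ l)
    (hkl : k ≠ l) (h : Finset α → ℝ)
    (hh : IsPolymatroid ({i, j, k, l} : Finset α) h)
    (hti : IsTight ({i, j, k, l} : Finset α) h)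
    (hIng : (h {i, k} + h {j, k} + h {i, l} + h {j, l} + h {k, l}
      - h {i, j} - h {k} - h {l} - h {i, k, l} - h {j, k, l}) ≤ 0) :
    h {j, l} ≤ h {i, j} ∧ h {i, l} ≤ h {i, j} ∧ h {k, l} ≤ h {i, j} := by
  have hijk := hti.apply_eq_of_insert_eq (T := {i, j, k}) (x := l)
    (by simp [hil.symm, hjl.symm, hkl.symm])
    (by ext; simp only [mem_insert, mem_singleton]; tauto)
  have hijl := hti.apply_eq_of_insert_eq (T := {i, j, l}) (x := k)
    (by simp [hik.symm, hjk.symm, hkl])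
    (by ext; simp only [mem_insert, mem_singleton]; tauto)
  have hikl := hti.apply_eq_of_insert_eq (T := {i, k, l}) (x := j)
    (by simp [hij.symm, hjk, hjl])
    (by ext; simp only [mem_insert, mem_singleton]; tauto)
  have hjkl := hti.apply_eq_of_insert_eq (x := i) (by simp [hij, hik, hil]) rfl
  have hk := hh.add_singleton_le_pair_add_pair (c := k) hij (by simp) (by simp) (by simp)
  have hl₁ := hh.add_singleton_le_pair_add_pair (c := l) hij (by simp) (by simp) (by simp)
  have hl₂ := hh.add_singleton_le_pair_add_pair (c := l) hik (by simp) (by simp) (by simp)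
  have hl₃ := hh.add_singleton_le_pair_add_pair (c := l) hjk (by simp) (by simp) (by simp)
  exact ⟨by linarith, by linarith, by linarith⟩
end

section
/- Let N = {i,j,k,l} and let the function r̄_{ij} on 𝒫(N) be defined by r̄_{ij}(K) = 3 if K ∈ {ik, jk, il, jl, kl}, and r̄_{ij}(K) = min{4, 2|K|} otherwise. Then r̄_{ij} is a tight polymatroid and ⬠_{ij} r̄_{ij} = −1. -/
/-!
Relabelling `i, j, k, l` as `0, 1, 2, 3 : Fin 4` along the injective map `![i, j, k, l]`
transports the polymatroid axioms, tightness and the pentagon expression, so everything reduces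
to finitely many checks on subsets of `Fin 4`, which the kernel decides.
-/

open Finset

variable {α : Type*} [DecidableEq α]

open Function

section Relabel

variable {β : Type*} [DecidableEq β] {e : β → α} {f : Finset α → ℝ}

theorem isPolymatroid_image_iff (he : Injective e) (M : Finset β) :
    IsPolymatroid (M.image e) f ↔ IsPolymatroid M (fun S => f (S.image e)) := by
  constructor
  · rintro ⟨h_empty, h_mono, h_submod⟩
    refine ⟨by simpa using h_empty, fun S T hST hTM => ?_, fun S T hSM hTM => ?_⟩
    · exact h_mono _ _ (image_subset_image hST) (image_subset_image hTM)
    · simpa only [image_union, image_inter _ _ he] using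
        h_submod _ _ (image_subset_image hSM) (image_subset_image hTM)
  · rintro ⟨h_empty, h_mono, h_submod⟩
    refine ⟨by simpa using h_empty, fun I J hIJ hJN => ?_, fun I J hIN hJN => ?_⟩
    · obtain ⟨T, hTM, rfl⟩ := subset_image_iff.1 hJN
      obtain ⟨S, -, rfl⟩ := subset_image_iff.1 (hIJ.trans hJN)
      exact h_mono S T ((image_subset_image_iff he).1 hIJ) hTM
    · obtain ⟨S, hSM, rfl⟩ := subset_image_iff.1 hIN
      obtain ⟨T, hTM, rfl⟩ := subset_image_iff.1 hJN
      simpa only [image_union, image_inter _ _ he] using h_submod S T hSM hTM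

theorem isTight_image_iff (he : Injective e) (M : Finset β) :
    IsTight (M.image e) f ↔ IsTight M (fun S => f (S.image e)) := by
  simp only [IsTight, forall_mem_image, image_sdiff _ _ he, image_singleton]

end Relabel

def pentagon (f : Finset α → ℝ) (i j k l : α) : ℝ :=
  f {i, k} + f {j, k} + f {i, l} + f {j, l} + f {k, l}
    - f {i, j} - f {k} - f {l} - f {i, k, l} - f {j, k, l}

theorem pentagon_comp_image {β : Type*} [DecidableEq β] (f : Finset α → ℝ) (e : β → α)
    (a b c d : β) :
    pentagon (fun S => f (S.image e)) a b c d = pentagon f (e a) (e b) (e c) (e d) := by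
  simp only [pentagon, image_insert, image_singleton]

/-- `r̄_{ij}` for `(i, j, k, l) = (0, 1, 2, 3)`, with values in `ℕ` so that its properties are
decidable. -/
def rbarFin : Finset (Fin 4) → ℕ := fun K =>
  if K = {0, 2} ∨ K = {1, 2} ∨ K = {0, 3} ∨ K = {1, 3} ∨ K = {2, 3}
  then 3 else min 4 (2 * #K)

theorem rbarFin_isPolymatroid : IsPolymatroid univ (fun K => (rbarFin K : ℝ)) := by
  refine ⟨?_, fun I J hIJ _ => ?_, fun I J _ _ => ?_⟩ <;> dsimp only
  · exact_mod_cast (by decide : rbarFin ∅ = 0)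
  · exact_mod_cast
      (by decide : ∀ S T : Finset (Fin 4), S ⊆ T → rbarFin S ≤ rbarFin T) I J hIJ
  · exact_mod_cast (by decide : ∀ S T : Finset (Fin 4),
      rbarFin (S ∪ T) + rbarFin (S ∩ T) ≤ rbarFin S + rbarFin T) I J

theorem rbarFin_isTight : IsTight univ (fun K => (rbarFin K : ℝ)) := fun x _ => by
  dsimp only
  exact_mod_cast (by decide : ∀ x : Fin 4, rbarFin univ = rbarFin (univ \ {x})) x

theorem rbarFin_pentagon : pentagon (fun K => (rbarFin K : ℝ)) 0 1 2 3 = -1 := by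
  norm_num +decide [pentagon, rbarFin]

theorem rbar_isTightPolymatroid (i j k l : α)
    (hij : i ≠ j) (hik : i ≠ k) (hil : i ≠ l) (hjk : j ≠ k) (hjl : j ≠ l)
    (hkl : k ≠ l) :
    let h : Finset α → ℝ := fun K =>
      if K = {i, k} ∨ K = {j, k} ∨ K = {i, l} ∨ K = {j, l} ∨ K = {k, l}
      then 3 else min 4 (2 * K.card)
    IsPolymatroid ({i, j, k, l} : Finset α) h ∧
    IsTight ({i, j, k, l} : Finset α) h ∧
    (h {i, k} + h {j, k} + h {i, l} + h {j, l} + h {k, l}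
      - h {i, j} - h {k} - h {l} - h {i, k, l} - h {j, k, l}) = -1 := by
  intro h
  let e : Fin 4 → α := ![i, j, k, l]
  have he : Injective e := by
    intro a b hab
    fin_cases a <;> fin_cases b <;> simp_all [e]
  have hN : ({i, j, k, l} : Finset α) = univ.image e := by
    simp [e, Fin.univ_succ, image_insert]
  have h_relabel : (fun S => h (S.image e)) = fun S => (rbarFin S : ℝ) := by
    funext S
    show (if S.image e = {e 0, e 2} ∨ S.image e = {e 1, e 2} ∨ S.image e = {e 0, e 3} ∨
      S.image e = {e 1, e 3} ∨ S.image e = {e 2, e 3} then (3 : ℝ)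
      else min 4 (2 * #(S.image e))) = rbarFin S
    have h_pair (a b : Fin 4) : ({e a, e b} : Finset α) = image e {a, b} := by
      rw [image_insert, image_singleton]
    simp only [h_pair, (image_injective he).eq_iff, card_image_of_injective _ he, rbarFin]
    split_ifs <;> push_cast <;> rfl
  refine ⟨?_, ?_, ?_⟩
  · rw [hN, isPolymatroid_image_iff he, h_relabel]
    exact rbarFin_isPolymatroid
  · rw [hN, isTight_image_iff he, h_relabel]
    exact rbarFin_isTight
  · change pentagon h (e 0) (e 1) (e 2) (e 3) = -1
    rw [← pentagon_comp_image, h_relabel]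
    exact rbarFin_pentagon
end

section
/- In Example of the exchangeable pair: let 0 ≤ p ≤ 1/2, let (ξ_i, ξ_j) be an exchangeable pair of {0,1}-valued random variables with P(ξ_i ξ_j = 00) = p, P(01) = P(10) = 1/2 − p, P(11) = p, ξ_k = min{ξ_i,ξ_j}, ξ_l = max{ξ_i,ξ_j}, and let h_p be the entropy function. Then the Ingleton score 𝕀_{ij}(h_p) = ⬠_{ij}h_p / h_p(N) equals [(2p+1)ln2 − 2κ(p) − 2κ(1−p)] / [2κ(p) + 2κ(1/2 − p)], where κ(u) = −u ln u (κ(0)=0). -/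
/-!
Each entropy `h(I)` is the entropy of the partition of the four atoms `00, 01, 10, 11` (of masses
`p, 1/2 - p, 1/2 - p, p`) induced by `(ξ_m)_{m ∈ I}`, and it depends on that partition only. The
partitions that occur are: the discrete one (for `ij`, `ikl`, `jkl` and `N`), one merging an atom of
mass `p` with one of mass `1/2 - p` (for `ik`, `jk`, `il`, `jl`), `{01, 10}` (for `kl`), and one
isolating a single atom of mass `p` (for `k`, `l`). What remains is the identity
`κ(1 - 2p) = 2κ(1/2 - p) - (1 - 2p) ln 2`.
-/

open Finset

noncomputable def kappa (u : ℝ) : ℝ := -u * Real.log u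

/-- Entropy of the partition of the four-point space induced by a map. -/
noncomputable def ent (mu : Bool × Bool → ℝ) {γ : Type} [Fintype γ] [DecidableEq γ]
    (T : Bool × Bool → γ) : ℝ :=
  ∑ c : γ, kappa (∑ ω ∈ Finset.univ.filter (fun ω => T ω = c), mu ω)

theorem kappa_zero : kappa 0 = 0 := by
  simp [kappa]

theorem kappa_half : kappa (1 / 2) = Real.log 2 / 2 := by
  rw [kappa, one_div, Real.log_inv]
  ring

theorem kappa_two_mul (x : ℝ) : kappa (2 * x) = 2 * kappa x - 2 * x * Real.log 2 := by
  have h : kappa (2 * x) = x * kappa 2 + 2 * kappa x := Real.negMulLog_mul 2 x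
  rw [h, show kappa 2 = -2 * Real.log 2 from rfl]
  ring

section Entropy

variable (mu : Bool × Bool → ℝ) {γ δ : Type} [Fintype γ] [DecidableEq γ] [Fintype δ]
  [DecidableEq δ]

theorem ent_eq_neg_sum_mul_log_fiber (T : Bool × Bool → γ) :
    ent mu T = -∑ ω, mu ω * Real.log (∑ ω' with T ω' = T ω, mu ω') := by
  calc ent mu T
        = -∑ c, ∑ ω with T ω = c, mu ω * Real.log (∑ ω' with T ω' = c, mu ω') := by
        simp only [ent, kappa, neg_mul, ← sum_mul, sum_neg_distrib]
    _ = -∑ c, ∑ ω with T ω = c, mu ω * Real.log (∑ ω' with T ω' = T ω, mu ω') := by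
        congr 1
        refine sum_congr rfl fun c _ => sum_congr rfl fun ω hω => ?_
        rw [(mem_filter.mp hω).2]
    _ = _ := by rw [sum_fiberwise]

theorem ent_congr {T : Bool × Bool → γ} {S : Bool × Bool → δ}
    (hTS : ∀ ω ω', T ω' = T ω ↔ S ω' = S ω) : ent mu T = ent mu S := by
  simp only [ent_eq_neg_sum_mul_log_fiber, hTS]

theorem ent_eq_sum_kappa_of_injective {T : Bool × Bool → γ} (hT : Function.Injective T) :
    ent mu T = ∑ ω, kappa (mu ω) := by
  rw [ent_congr mu (T := T) (S := id) fun _ _ => hT.eq_iff]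
  simp [ent, filter_eq']

end Entropy

noncomputable def pairLaw (p : ℝ) : Bool × Bool → ℝ := fun ω =>
  if ω = (false, false) then p else if ω = (true, true) then p else 1/2 - p

/-- `ξ_i, ξ_j, ξ_k = min(ξ_i, ξ_j), ξ_l = max(ξ_i, ξ_j)`, indexed by `0, 1, 2, 3`. -/
def pairVars : Fin 4 → Bool × Bool → Bool := fun m ω =>
  if m = 0 then ω.1 else if m = 1 then ω.2
  else if m = 2 then (ω.1 && ω.2) else (ω.1 || ω.2)

def pairObs (I : Finset (Fin 4)) (ω : Bool × Bool) : Fin 4 → Option Bool :=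
  fun m => if m ∈ I then some (pairVars m ω) else none

noncomputable def pairEntropy (p : ℝ) (I : Finset (Fin 4)) : ℝ :=
  ent (pairLaw p) (pairObs I)

namespace pairEntropy

variable (p : ℝ)

theorem eq_of_injective {I : Finset (Fin 4)} (hI : Function.Injective (pairObs I)) :
    pairEntropy p I = 2 * kappa p + 2 * kappa (1/2 - p) := by
  rw [pairEntropy, ent_eq_sum_kappa_of_injective _ hI]
  simp +decide only [pairLaw, Fintype.sum_prod_type, Fintype.sum_bool, ↓reduceIte]
  ring_nf

theorem ik : pairEntropy p {0, 2} = kappa (1/2) + kappa p + kappa (1/2 - p) := by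
  rw [pairEntropy, ent_congr _ (S := fun ω => (ω.1, ω.1 && ω.2)) (by decide)]
  simp +decide only [ent, pairLaw, sum_filter, Fintype.sum_prod_type, Fintype.sum_bool,
    ↓reduceIte, add_zero, zero_add, kappa_zero]
  ring_nf

theorem jk : pairEntropy p {1, 2} = kappa (1/2) + kappa p + kappa (1/2 - p) := by
  rw [pairEntropy, ent_congr _ (S := fun ω => (ω.2, ω.1 && ω.2)) (by decide)]
  simp +decide only [ent, pairLaw, sum_filter, Fintype.sum_prod_type, Fintype.sum_bool,
    ↓reduceIte, add_zero, zero_add, kappa_zero]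
  ring_nf

theorem il : pairEntropy p {0, 3} = kappa (1/2) + kappa p + kappa (1/2 - p) := by
  rw [pairEntropy, ent_congr _ (S := fun ω => (ω.1, ω.1 || ω.2)) (by decide)]
  simp +decide only [ent, pairLaw, sum_filter, Fintype.sum_prod_type, Fintype.sum_bool,
    ↓reduceIte, add_zero, zero_add, kappa_zero]
  ring_nf

theorem jl : pairEntropy p {1, 3} = kappa (1/2) + kappa p + kappa (1/2 - p) := by
  rw [pairEntropy, ent_congr _ (S := fun ω => (ω.2, ω.1 || ω.2)) (by decide)]
  simp +decide only [ent, pairLaw, sum_filter, Fintype.sum_prod_type, Fintype.sum_bool,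
    ↓reduceIte, add_zero, zero_add, kappa_zero]
  ring_nf

theorem kl : pairEntropy p {2, 3} = 2 * kappa p + kappa (1 - 2 * p) := by
  rw [pairEntropy, ent_congr _ (S := fun ω => (ω.1 && ω.2, ω.1 || ω.2)) (by decide)]
  simp +decide only [ent, pairLaw, sum_filter, Fintype.sum_prod_type, Fintype.sum_bool,
    ↓reduceIte, add_zero, zero_add, kappa_zero]
  ring_nf

theorem k : pairEntropy p {2} = kappa p + kappa (1 - p) := by
  rw [pairEntropy, ent_congr _ (S := fun ω => ω.1 && ω.2) (by decide)]
  simp +decide only [ent, pairLaw, sum_filter, Fintype.sum_prod_type, Fintype.sum_bool,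
    ↓reduceIte]
  ring_nf

theorem l : pairEntropy p {3} = kappa p + kappa (1 - p) := by
  rw [pairEntropy, ent_congr _ (S := fun ω => ω.1 || ω.2) (by decide)]
  simp +decide only [ent, pairLaw, sum_filter, Fintype.sum_prod_type, Fintype.sum_bool,
    ↓reduceIte]
  ring_nf

end pairEntropy

theorem four_atom_ingleton_score_general (p : ℝ) :
    let mu : Bool × Bool → ℝ := fun ω =>
      if ω = (false, false) then p else if ω = (true, true) then p else 1/2 - p
    let ξ : Fin 4 → Bool × Bool → Bool := fun m ω =>
      if m = 0 then ω.1 else if m = 1 then ω.2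
      else if m = 2 then (ω.1 && ω.2) else (ω.1 || ω.2)
    let h : Finset (Fin 4) → ℝ := fun I =>
      ent mu (fun ω => fun m : Fin 4 => if m ∈ I then some (ξ m ω) else none)
    (h {0, 2} + h {1, 2} + h {0, 3} + h {1, 3} + h {2, 3}
      - h {0, 1} - h {2} - h {3} - h {0, 2, 3} - h {1, 2, 3}) / h Finset.univ
    = ((2 * p + 1) * Real.log 2 - 2 * kappa p - 2 * kappa (1 - p))
      / (2 * kappa p + 2 * kappa (1/2 - p)) := by
  intro mu ξ h
  change (pairEntropy p {0, 2} + pairEntropy p {1, 2} + pairEntropy p {0, 3}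
      + pairEntropy p {1, 3} + pairEntropy p {2, 3} - pairEntropy p {0, 1} - pairEntropy p {2}
      - pairEntropy p {3} - pairEntropy p {0, 2, 3} - pairEntropy p {1, 2, 3})
      / pairEntropy p univ = _
  have discrete (I : Finset (Fin 4)) (hI : Function.Injective (pairObs I)) :=
    pairEntropy.eq_of_injective p hI
  rw [pairEntropy.ik, pairEntropy.jk, pairEntropy.il, pairEntropy.jl, pairEntropy.kl,
    pairEntropy.k, pairEntropy.l, discrete {0, 1} (by decide), discrete {0, 2, 3} (by decide),
    discrete {1, 2, 3} (by decide), discrete univ (by decide),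
    show 1 - 2 * p = 2 * (1/2 - p) by ring, kappa_two_mul, kappa_half]
  congr 1
  ring

theorem four_atom_ingleton_score (p : ℝ) (hp0 : 0 ≤ p) (hp : p ≤ 1/2) :
    let mu : Bool × Bool → ℝ := fun ω =>
      if ω = (false, false) then p else if ω = (true, true) then p else 1/2 - p
    let ξ : Fin 4 → Bool × Bool → Bool := fun m ω =>
      if m = 0 then ω.1 else if m = 1 then ω.2
      else if m = 2 then (ω.1 && ω.2) else (ω.1 || ω.2)
    let h : Finset (Fin 4) → ℝ := fun I =>
      ent mu (fun ω => fun m : Fin 4 => if m ∈ I then some (ξ m ω) else none)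
    (h {0, 2} + h {1, 2} + h {0, 3} + h {1, 3} + h {2, 3}
      - h {0, 1} - h {2} - h {3} - h {0, 2, 3} - h {1, 2, 3}) / h Finset.univ
    = ((2 * p + 1) * Real.log 2 - 2 * kappa p - 2 * kappa (1 - p))
      / (2 * kappa p + 2 * kappa (1/2 - p)) :=
  four_atom_ingleton_score_general p
end
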